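/- arXiv:2211.13361 — 6 statements merged into one kernel-verified Lean document; each statement's English description precedes it below -/
import Mathlib

section
/- Let κ be a weakly compact cardinal and let A ⊆ κ be a set of infinite regular cardinals that is unbounded in κ. Then κ ∈ spec(A) if and only if A is stationary in κ. -/
universe u

open Cardinal Set

namespace TukeySpec

/-- A subset `S` of a preorder is cofinal if every element has an upper bound in `S`. -/
def IsCofinal {P : Type*} [Preorder P] (S : Set P) : Prop :=
  ∀ p : P, ∃ s ∈ S, p ≤ s

/-- `Q` is a Tukey quotient of `P` (i.e. `P ≥_T Q`): there is a map `P → Q`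
sending cofinal sets to cofinal sets. -/
def TukeyQuot (P : Type*) (Q : Type*) [Preorder P] [Preorder Q] : Prop :=
  ∃ φ : P → Q, ∀ S : Set P, IsCofinal S → IsCofinal (φ '' S)

/-- `P` has calibre `(κ, l, m)`. -/
def Calibre (P : Type u) [Preorder P] (κ l m : Cardinal.{u}) : Prop :=
  ∀ P' : Set P, #P' = κ → ∃ R ⊆ P', #R = l ∧ ∀ B ⊆ R, #B = m → BddAbove B

/-- `P` has calibre `κ` (the simplified form): every `κ`-sized subset has a
`κ`-sized subset which is bounded in `P`. -/
def CalibreSimple (P : Type u) [Preorder P] (κ : Cardinal.{u}) : Prop :=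
  ∀ P' : Set P, #P' = κ → ∃ R ⊆ P', #R = κ ∧ BddAbove R

/-- The Tukey spectrum of a poset: all regular cardinals `κ` with `P ≥_T κ`,
where `κ` carries its usual (ordinal) ordering. -/
def specPoset (P : Type u) [Preorder P] : Set Cardinal.{u} :=
  {κ | κ.IsRegular ∧ TukeyQuot P ↥(Set.Iio κ.ord)}

/-- The product `∏A` of a set of cardinals: all functions on `A` with
`f a < a` (as ordinals). -/
def piSet (A : Set Cardinal.{0}) : Set (↥A → Ordinal.{0}) :=
  {f | ∀ a : ↥A, f a < (a : Cardinal).ord}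

/-- A family of members of `∏A` is bounded if it has an upper bound in `(∏A, ≤)`
(pointwise order). -/
def BddIn (A : Set Cardinal.{0}) (S : Set (↥A → Ordinal.{0})) : Prop :=
  ∃ h ∈ piSet A, ∀ f ∈ S, ∀ a : ↥A, f a ≤ h a

/-- The Tukey spectrum of a set `A` of regular cardinals: all regular `κ` for which
there is a `κ`-sized family `F ⊆ ∏A` all of whose `κ`-sized subfamilies are
unbounded in `(∏A, ≤)`. -/
def spec (A : Set Cardinal.{0}) : Set Cardinal.{0} :=
  {κ | κ.IsRegular ∧ ∃ F ⊆ piSet A, #F = Cardinal.lift.{1} κ ∧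
    ∀ F₀ ⊆ F, #F₀ = Cardinal.lift.{1} κ → ¬ BddIn A F₀}

/-- `cf(∏A/D)`: the least cardinality of a subset of `∏A` which is cofinal
modulo the ultrafilter `D`. -/
noncomputable def cofUlt (A : Set Cardinal.{0}) (D : Ultrafilter ↥A) : Cardinal.{1} :=
  sInf {c : Cardinal.{1} | ∃ S ⊆ piSet A, #S = c ∧
    ∀ f ∈ piSet A, ∃ g ∈ S, {a : ↥A | f a ≤ g a} ∈ D}

/-- `pcf(A)`: the set of all cofinalities `cf(∏A/D)` as `D` ranges over
ultrafilters on `A`. -/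
def pcf (A : Set Cardinal.{0}) : Set Cardinal.{0} :=
  {κ | ∃ D : Ultrafilter ↥A, Cardinal.lift.{1} κ = cofUlt A D}

/-- `ub(F)`: the set of coordinates `a ∈ A` where the family `F` is unbounded. -/
def ub (A : Set Cardinal.{0}) (F : Set (↥A → Ordinal.{0})) : Set ↥A :=
  {a | ∀ β < (a : Cardinal).ord, ∃ f ∈ F, β < f a}

/-- The strong part of the Tukey spectrum: `l ∈ spec*(A)` iff there is an
`l`-sized family `F ⊆ ∏A` such that every `l`-sized subfamily has a set of
unbounded coordinates which is unbounded in `sup A`. -/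
def specStarMem (A : Set Cardinal.{0}) (l : Cardinal.{0}) : Prop :=
  l.IsRegular ∧ ∃ F ⊆ piSet A, #F = Cardinal.lift.{1} l ∧
    ∀ F₀ ⊆ F, #F₀ = Cardinal.lift.{1} l →
      ∀ β < sSup A, ∃ a ∈ ub A F₀, β < (a : Cardinal)

/-- `κ` is a limit point of the set `X` of cardinals. -/
def IsLimitPt (X : Set Cardinal.{0}) (κ : Cardinal.{0}) : Prop :=
  ∀ β < κ, ∃ x ∈ X, β < x ∧ x < κ

/-- `C` is a closed unbounded subset of `κ`. -/
def IsClubIn (C : Set Ordinal.{0}) (κ : Ordinal.{0}) : Prop :=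
  C ⊆ Set.Iio κ ∧ (∀ β < κ, ∃ o ∈ C, β < o) ∧
    ∀ β < κ, β ≠ 0 → (∀ γ < β, ∃ o ∈ C, γ < o ∧ o < β) → β ∈ C

/-- A set `S` of cardinals is stationary in `κ`: it meets every club of `κ`. -/
def StatIn (S : Set Cardinal.{0}) (κ : Cardinal.{0}) : Prop :=
  ∀ C : Set Ordinal.{0}, IsClubIn C κ.ord → ∃ a ∈ S, a.ord ∈ C

/-- `κ` is Mahlo: strongly inaccessible and the regular cardinals below `κ`
are stationary in `κ`. -/
def IsMahlo (κ : Cardinal.{0}) : Prop :=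
  κ.IsInaccessible ∧ StatIn {a | a < κ ∧ a.IsRegular} κ

/-- `κ` is weakly compact: strongly inaccessible and `κ → (κ)²₂`. -/
def IsWeaklyCompact (κ : Cardinal.{0}) : Prop :=
  κ.IsInaccessible ∧
    ∀ c : Ordinal.{0} → Ordinal.{0} → Bool,
      ∃ H ⊆ Set.Iio κ.ord, #H = Cardinal.lift.{1} κ ∧
        ∃ b : Bool, ∀ α ∈ H, ∀ β ∈ H, α < β → c α β = b

/-- `θ` carries a Jónsson algebra: there is `F` from finite subsets of `θ` to `θ`
such that `F` applied to finite subsets of any `θ`-sized `H ⊆ θ` covers `θ`. -/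
def CarriesJonsson (θ : Cardinal.{0}) : Prop :=
  ∃ F : Finset Ordinal.{0} → Ordinal.{0},
    (∀ s : Finset Ordinal.{0}, (↑s : Set Ordinal) ⊆ Set.Iio θ.ord → F s < θ.ord) ∧
    ∀ H ⊆ Set.Iio θ.ord, #H = Cardinal.lift.{1} θ →
      ∀ γ < θ.ord, ∃ s : Finset Ordinal.{0}, (↑s : Set Ordinal) ⊆ H ∧ F s = γ

/-- `cf(∏A/J_bd)`: the least cardinality of a subset of `∏A` cofinal modulo
the ideal of bounded subsets of `A`. -/
noncomputable def cofJbd (A : Set Cardinal.{0}) : Cardinal.{1} :=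
  sInf {c : Cardinal.{1} | ∃ S ⊆ piSet A, #S = c ∧
    ∀ f ∈ piSet A, ∃ g ∈ S, ∃ b < sSup A, ∀ a : ↥A, b < (a : Cardinal) → f a ≤ g a}

/-- `μ` is a limit cardinal. -/
def IsLimitCard (μ : Cardinal.{0}) : Prop :=
  ℵ₀ ≤ μ ∧ ∀ ν < μ, Order.succ ν < μ

/-!
If `A` is stationary, take `f_α (a) = α` for `α < a` and `0` otherwise. The nonzero limit points
of the indices of `κ` many of these functions form a club, so some `a ∈ A` is such a limit point,
and then no bound `h` of those functions can have `h a < a`.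

Conversely, let `C` be a club avoiding `A` and `f_ξ`, `ξ < κ`, a family in `∏A`. Colour a pair
`α < β` by whether `f_α ≤ f_β` lexicographically on the coordinates `a ≤ α`; weak compactness
gives a homogeneous `H` of size `κ`. For each `δ`, the restrictions of the `f_η`, `η ∈ H`, to the
coordinates `a ≤ δ` are then lexicographically monotone and, `κ` being a strong limit, take fewer
than `κ` values, so they are eventually constant. Thin `H` out so that between any two chosen
indices `t < t'` lie a point of `C` and the point from which the restrictions to the coordinates
`a ≤ t` are constant. At `a ∈ A` the club has a gap below `a`, so fewer than `a` chosen indices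
lie below `a`; past the first chosen index `≥ a` all chosen functions agree at `a`. As `a` is
regular, the values at `a` are bounded below `a`.
-/

section OrdinalBounds

variable {κ : Cardinal.{u}}

theorem sSup_lt_ord_of_lift_mk_lt (hκ : κ.IsRegular) {s : Set Ordinal.{u}}
    (hs : #s < Cardinal.lift.{u + 1} κ) (h : ∀ x ∈ s, x < κ.ord) : sSup s < κ.ord :=
  Ordinal.sSup_lt_of_lt_cof (by rwa [← Ordinal.lift_cof, hκ.cof_ord]) h

theorem lift_mk_lt_of_subset_Iic (hκ : ℵ₀ ≤ κ) {s : Set Ordinal.{u}} {β : Ordinal.{u}}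
    (hβ : β < κ.ord) (hs : s ⊆ Iic β) : #s < Cardinal.lift.{u + 1} κ :=
  calc #s ≤ #(Iio (Order.succ β)) :=
        mk_le_mk_of_subset fun _ hx => mem_Iio.2 (Order.lt_succ_iff.2 (hs hx))
    _ = Cardinal.lift (Order.succ β).card := mk_Iio_ordinal _
    _ < Cardinal.lift κ :=
      lift_lt.2 (lt_ord.1 ((isSuccLimit_ord hκ).succ_lt hβ))

theorem exists_lt_of_lift_le_mk (hκ : ℵ₀ ≤ κ) {s : Set Ordinal.{u}}
    (hs : Cardinal.lift.{u + 1} κ ≤ #s) : ∀ β < κ.ord, ∃ x ∈ s, β < x := by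
  intro β hβ
  by_contra! h
  exact (lift_mk_lt_of_subset_Iic hκ hβ h).not_ge hs

theorem lift_mk_eq_of_forall_exists_lt (hκ : κ.IsRegular) {s : Set Ordinal.{u}}
    (hsκ : s ⊆ Iio κ.ord) (hs : ∀ β < κ.ord, ∃ x ∈ s, β < x) :
    #s = Cardinal.lift.{u + 1} κ := by
  refine le_antisymm ?_ (not_lt.1 fun hlt => ?_)
  · simpa using mk_le_mk_of_subset hsκ
  · obtain ⟨x, hx, hlt'⟩ := hs _ (sSup_lt_ord_of_lift_mk_lt hκ hlt hsκ)
    exact hlt'.not_ge (le_csSup ⟨κ.ord, fun y hy => (hsκ hy).le⟩ hx)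

end OrdinalBounds

theorem _root_.Cardinal.IsStrongLimit.power_lt {κ : Cardinal.{u}} (hκ : κ.IsStrongLimit)
    {x y : Cardinal.{u}} (hx : x < κ) (hy : y < κ) : x ^ y < κ := by
  by_cases hfin : x < ℵ₀ ∧ y < ℵ₀
  · exact (power_lt_aleph0 hfin.1 hfin.2).trans_le hκ.aleph0_le
  have hμ : ℵ₀ ≤ max x y := by
    rw [not_and_or, not_lt, not_lt] at hfin
    exact hfin.elim le_max_of_le_left le_max_of_le_right
  calc x ^ y ≤ max x y ^ max x y :=
        (power_le_power_right (le_max_left x y)).trans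
          (power_le_power_left (aleph0_pos.trans_le hμ).ne' (le_max_right x y))
    _ = 2 ^ max x y := power_self_eq hμ
    _ < κ := hκ.isStrongPrelimit (max_lt hx hy)

theorem _root_.Cardinal.IsStrongLimit.lift {κ : Cardinal.{u}} (hκ : κ.IsStrongLimit) :
    (Cardinal.lift.{v} κ).IsStrongLimit := by
  refine ⟨by simpa using hκ.ne_zero, fun x hx => ?_⟩
  obtain ⟨x, rfl⟩ := mem_range_lift_of_le hx.le
  rw [← lift_two_power, lift_lt] at *
  exact hκ.isStrongPrelimit hx

theorem lift_mk_lt_of_forall_le_of_eq_zero {κ : Cardinal.{u}} (hκ : κ.IsStrongLimit)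
    {ι : Type (u + 1)} {s : Set ι} (hs : #s < Cardinal.lift.{u + 1} κ) {δ : Ordinal.{u}}
    (hδ : δ < κ.ord) {V : Set (ι → Ordinal.{u})}
    (hV : ∀ g ∈ V, ∀ i, g i ≤ δ ∧ (i ∉ s → g i = 0)) : #V < Cardinal.lift.{u + 1} κ := by
  have hinj : Function.Injective fun g : V => fun i : s => (⟨g.1 i, (hV g g.2 i).1⟩ : Iic δ) := by
    intro g g' h
    ext i
    by_cases hi : i ∈ s
    · exact congrArg Subtype.val (congrFun h ⟨i, hi⟩)
    · rw [(hV _ g.2 i).2 hi, (hV _ g'.2 i).2 hi]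
  calc #V ≤ #(s → Iic δ) := mk_le_of_injective hinj
    _ = #(Iic δ) ^ #s := (power_def _ _).symm
    _ < Cardinal.lift κ := hκ.lift.power_lt
        (lift_mk_lt_of_subset_Iic hκ.aleph0_le hδ subset_rfl) hs

def limitPointsBelow (S : Set Ordinal.{u}) (o : Ordinal.{u}) : Set Ordinal.{u} :=
  {β | β < o ∧ β ≠ 0 ∧ ∀ γ < β, ∃ s ∈ S, γ < s ∧ s < β}

theorem isClubIn_limitPointsBelow {o : Ordinal.{0}} (ho : ℵ₀ < o.cof) {S : Set Ordinal.{0}}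
    (hSo : S ⊆ Iio o) (hS : ∀ β < o, ∃ s ∈ S, β < s) : IsClubIn (limitPointsBelow S o) o := by
  refine ⟨fun β hβ => hβ.1, fun β hβ => ?_, fun β hβo hβ0 hβ => ⟨hβo, hβ0, fun γ hγ => ?_⟩⟩
  · choose! next hnextS hnext using hS
    have hsup : Ordinal.nfp next β < o := Ordinal.nfp_lt_ord ho (fun x hx => hSo (hnextS x hx)) hβ
    have hiter : ∀ n, next^[n] β < o := fun n => (Ordinal.iterate_le_nfp next β n).trans_lt hsup
    have hβsup : β < Ordinal.nfp next β := (hnext β hβ).trans_le (Ordinal.iterate_le_nfp next β 1)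
    refine ⟨Ordinal.nfp next β, ⟨hsup, (zero_le.trans_lt hβsup).ne', fun γ hγ => ?_⟩, hβsup⟩
    obtain ⟨n, hn⟩ := Ordinal.lt_nfp_iff.1 hγ
    refine ⟨next^[n + 1] β, ?_, ?_, ?_⟩ <;> rw [Function.iterate_succ_apply']
    · exact hnextS _ (hiter n)
    · exact hn.trans (hnext _ (hiter n))
    · have h := hnext _ (hiter (n + 1))
      rw [Function.iterate_succ_apply'] at h
      refine h.trans_le ?_
      simpa only [Function.iterate_succ_apply'] using Ordinal.iterate_le_nfp next β (n + 2)
  · obtain ⟨δ, hδ, hγδ, hδβ⟩ := hβ γ hγ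
    obtain ⟨s, hs, hγs, hsδ⟩ := hδ.2.2 γ hγδ
    exact ⟨s, hs, hγs, hsδ.trans hδβ⟩

theorem IsClubIn.exists_gap {C : Set Ordinal.{0}} {o β : Ordinal.{0}} (hC : IsClubIn C o)
    (hβo : β < o) (hβ0 : β ≠ 0) (hβC : β ∉ C) : ∃ γ < β, ∀ x ∈ C, γ < x → β ≤ x := by
  by_contra! h
  exact hβC (hC.2.2 β hβo hβ0 h)

theorem exists_forall_eq_of_monotoneOn_or_antitoneOn {X : Type (u + 1)} [PartialOrder X]
    {κ : Cardinal.{u}} (hκ : κ.IsRegular) {S : Set Ordinal.{u}} (hS : S ⊆ Iio κ.ord)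
    {g : Ordinal.{u} → X} (hg : MonotoneOn g S ∨ AntitoneOn g S)
    (hsmall : #(g '' S) < Cardinal.lift.{u + 1} κ) :
    ∃ B < κ.ord, ∀ η ∈ S, ∀ η' ∈ S, B < η → B < η' → g η = g η' := by
  wlog hmono : MonotoneOn g S generalizing X
  · exact this (X := Xᵒᵈ) (g := OrderDual.toDual ∘ g) (Or.inl (hg.resolve_left hmono).dual_right)
      hsmall (hg.resolve_left hmono).dual_right
  have hrep : ∀ y ∈ g '' S, ∃ x ∈ S, g x = y := fun _ hy => hy
  choose! r hrS hr using hrep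
  have hB : sSup (r '' (g '' S)) < κ.ord :=
    sSup_lt_ord_of_lift_mk_lt hκ (mk_image_le.trans_lt hsmall)
      (forall_mem_image.2 fun y hy => hS (hrS y hy))
  refine ⟨_, hB, ?_⟩
  suffices key : ∀ η ∈ S, ∀ η' ∈ S, sSup (r '' (g '' S)) < η → η ≤ η' → g η = g η' by
    intro η hη η' hη' hBη hBη'
    rcases le_total η η' with h | h
    exacts [key η hη η' hη' hBη h, (key η' hη' η hη hBη' h).symm]
  intro η hη η' hη' hBη hle
  have hgη' : g η' ∈ g '' S := mem_image_of_mem g hη'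
  have hρη : r (g η') < η :=
    (le_csSup ⟨κ.ord, forall_mem_image.2 fun y hy => (hS (hrS y hy)).le⟩
      (mem_image_of_mem r hgη')).trans_lt hBη
  refine le_antisymm (hmono hη hη' hle) ?_
  calc g η' = g (r (g η')) := (hr _ hgη').symm
    _ ≤ g η := hmono (hrS _ hgη') hη hρη.le

theorem exists_unbounded_subset_forall_lt {κ : Cardinal.{u}} (hκ : κ.IsRegular)
    {H : Set Ordinal.{u}} (hH : ∀ β < κ.ord, ∃ x ∈ H, β < x)
    {G : Ordinal.{u} → Ordinal.{u}} (hG : ∀ x ∈ H, G x < κ.ord) :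
    ∃ T ⊆ H, (∀ β < κ.ord, ∃ t ∈ T, β < t) ∧ ∀ t ∈ T, ∀ t' ∈ T, t < t' → G t < t' := by
  set 𝒮 := {T | T ⊆ H ∧ ∀ t ∈ T, ∀ t' ∈ T, t < t' → G t < t'}
  have hchains : ∀ c ⊆ 𝒮, IsChain (· ⊆ ·) c → ⋃₀ c ∈ 𝒮 := by
    refine fun c hc hchain => ⟨sUnion_subset fun T hT => (hc hT).1, ?_⟩
    rintro t ⟨T₁, hT₁, ht⟩ t' ⟨T₂, hT₂, ht'⟩ hlt
    rcases hchain.total hT₁ hT₂ with h | h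
    exacts [(hc hT₂).2 t (h ht) t' ht' hlt, (hc hT₁).2 t ht t' (h ht') hlt]
  obtain ⟨T, hT⟩ := zorn_subset 𝒮 fun c hc hchain =>
    ⟨⋃₀ c, hchains c hc hchain, fun T hT => subset_sUnion_of_mem hT⟩
  refine ⟨T, hT.prop.1, fun β hβ => ?_, hT.prop.2⟩
  by_contra! hTβ
  have hTκ : #T < Cardinal.lift κ := lift_mk_lt_of_subset_Iic hκ.aleph0_le hβ hTβ
  have hGT : sSup (G '' T) < κ.ord := sSup_lt_ord_of_lift_mk_lt hκ
    (mk_image_le.trans_lt hTκ) (forall_mem_image.2 fun t ht => hG t (hT.prop.1 ht))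
  obtain ⟨x, hxH, hx⟩ := hH _ (max_lt hβ hGT)
  have hTx : ∀ t ∈ T, t < x := fun t ht => (hTβ t ht).trans_lt ((le_max_left _ _).trans_lt hx)
  have hins : insert x T ∈ 𝒮 := by
    refine ⟨insert_subset hxH hT.prop.1, ?_⟩
    rintro t (rfl | ht) t' (rfl | ht') hlt
    · exact hlt.false.elim
    · exact ((hTx t' ht').trans hlt).false.elim
    · exact (le_csSup ⟨κ.ord, forall_mem_image.2 fun t ht => (hG t (hT.prop.1 ht)).le⟩
        (mem_image_of_mem G ht)).trans_lt ((le_max_right _ _).trans_lt hx)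
    · exact hT.prop.2 t ht t' ht' hlt
  exact (hTx x (hT.2 hins (subset_insert x T) (mem_insert x T))).false

theorem lift_mk_inter_Iio_ord_lt {c : Cardinal.{u}} (hc : ℵ₀ ≤ c) {C T : Set Ordinal.{u}}
    {γ : Ordinal.{u}} (hγ : γ < c.ord) (hgap : ∀ x ∈ C, γ < x → c.ord ≤ x)
    (hsep : ∀ t ∈ T, ∀ t' ∈ T, t < t' → ∃ x ∈ C, t < x ∧ x < t') :
    #(T ∩ Iio c.ord : Set Ordinal) < Cardinal.lift.{u + 1} c := by
  by_contra! hle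
  have hunb := exists_lt_of_lift_le_mk hc hle
  obtain ⟨t, ⟨htT, htc⟩, hγt⟩ := hunb γ hγ
  obtain ⟨t', ⟨ht'T, ht'c⟩, htt'⟩ := hunb t htc
  obtain ⟨x, hxC, htx, hxt'⟩ := hsep t htT t' ht'T htt'
  exact (hgap x hxC (hγt.trans htx)).not_gt (hxt'.trans ht'c)

theorem lift_mk_image_lt_of_eq_on_tail {c : Cardinal.{u}} (hc : ℵ₀ ≤ c) {T : Set Ordinal.{u}}
    {o : Ordinal.{u}} {g : Ordinal.{u} → Ordinal.{u}}
    (hsmall : #(T ∩ Iio o : Set Ordinal) < Cardinal.lift.{u + 1} c)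
    (htail : ∀ j₀ ∈ T, o ≤ j₀ → ∀ j ∈ T, ∀ j' ∈ T, j₀ < j → j₀ < j' → g j = g j') :
    #(g '' T) < Cardinal.lift.{u + 1} c := by
  have hfin : (g '' (T ∩ Ici o)).Finite := by
    rcases (T ∩ Ici o).eq_empty_or_nonempty with h | hne
    · simp [h]
    have hj₀ : sInf (T ∩ Ici o) ∈ T ∩ Ici o := csInf_mem hne
    have htail' : (g '' (T ∩ Ioi (sInf (T ∩ Ici o)))).Subsingleton := by
      rintro _ ⟨j, hj, rfl⟩ _ ⟨j', hj', rfl⟩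
      exact htail _ hj₀.1 hj₀.2 j hj.1 j' hj'.1 hj.2 hj'.2
    refine (htail'.finite.insert (g (sInf (T ∩ Ici o)))).subset ?_
    rintro _ ⟨j, hj, rfl⟩
    rcases (csInf_le' hj : sInf (T ∩ Ici o) ≤ j).eq_or_lt with h | h
    · exact h ▸ mem_insert _ _
    · exact mem_insert_of_mem _ ⟨j, ⟨hj.1, h⟩, rfl⟩
  have hsplit : g '' T = g '' (T ∩ Iio o) ∪ g '' (T ∩ Ici o) := by
    rw [← image_union, ← inter_union_distrib_left, Iio_union_Ici, inter_univ]
  rw [hsplit]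
  refine (mk_union_le _ _).trans_lt (add_lt_of_lt (aleph0_le_lift.2 hc)
    (mk_image_le.trans_lt hsmall) ?_)
  exact (lt_aleph0_iff_set_finite.2 hfin).trans_le (aleph0_le_lift.2 hc)

theorem toLex_indicator_le_toLex_indicator {ι β : Type*} [LinearOrder ι] [PartialOrder β]
    [Zero β] {s : Set ι} (hs : IsLowerSet s) {x y : ι → β} (h : toLex x ≤ toLex y) :
    toLex (s.indicator x) ≤ toLex (s.indicator y) := by
  rcases h.eq_or_lt with h | ⟨i, hlt, hi⟩
  · rw [toLex_inj.1 h]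
  by_cases his : i ∈ s
  · refine le_of_lt ⟨i, fun j hj => ?_, ?_⟩
    · simpa [indicator_of_mem (hs hj.le his)] using hlt j hj
    · simpa [indicator_of_mem his] using hi
  · refine le_of_eq (congrArg toLex (indicator_congr fun j hj => hlt j ?_))
    exact lt_of_not_ge fun hij => his (hs hij hj)

theorem IsWeaklyCompact.exists_homogeneous {κ : Cardinal.{0}} (hκ : IsWeaklyCompact κ)
    (r : Ordinal.{0} → Ordinal.{0} → Prop) :
    ∃ H ⊆ Iio κ.ord, #H = Cardinal.lift.{1} κ ∧
      ((∀ α ∈ H, ∀ β ∈ H, α < β → r α β) ∨ ∀ α ∈ H, ∀ β ∈ H, α < β → ¬ r α β) := by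
  classical
  obtain ⟨H, hHκ, hH, b, hb⟩ := hκ.2 fun α β => decide (r α β)
  refine ⟨H, hHκ, hH, ?_⟩
  cases b
  · exact Or.inr fun α hα β hβ hαβ => by simpa using hb α hα β hβ hαβ
  · exact Or.inl fun α hα β hβ hαβ => by simpa using hb α hα β hβ hαβ

section LexRestrict

variable {A : Set Cardinal.{0}} (f : Ordinal.{0} → ↥A → Ordinal.{0})

def coordsIic (A : Set Cardinal.{0}) (δ : Ordinal.{0}) : Set ↥A :=
  {a | (a : Cardinal).ord ≤ δ}

theorem isLowerSet_coordsIic (δ : Ordinal.{0}) : IsLowerSet (coordsIic A δ) :=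
  fun _ _ hba ha => (ord_le_ord.2 hba).trans ha

noncomputable def lexRestrict (δ η : Ordinal.{0}) : Lex (↥A → Ordinal.{0}) :=
  toLex ((coordsIic A δ).indicator (f η))

theorem lexRestrict_le_lexRestrict_of_le {δ α η η' : Ordinal.{0}} (hδα : δ ≤ α)
    (h : lexRestrict f α η ≤ lexRestrict f α η') : lexRestrict f δ η ≤ lexRestrict f δ η' := by
  have hsub : coordsIic A δ ∩ coordsIic A α = coordsIic A δ :=
    inter_eq_left.2 fun _ ha => ha.trans hδα
  have := toLex_indicator_le_toLex_indicator (isLowerSet_coordsIic δ) h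
  simpa only [lexRestrict, ofLex_toLex, indicator_indicator, hsub] using this

theorem apply_eq_of_lexRestrict_eq {δ η η' : Ordinal.{0}}
    (h : lexRestrict f δ η = lexRestrict f δ η') {a : ↥A} (ha : (a : Cardinal).ord ≤ δ) :
    f η a = f η' a := by
  simpa [lexRestrict, indicator_of_mem (show a ∈ coordsIic A δ from ha)] using
    congrArg (fun g : Lex (↥A → Ordinal.{0}) => ofLex g a) h

theorem monotoneOn_or_antitoneOn_lexRestrict {H : Set Ordinal.{0}}
    (hH : (∀ α ∈ H, ∀ β ∈ H, α < β → lexRestrict f α α ≤ lexRestrict f α β) ∨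
      ∀ α ∈ H, ∀ β ∈ H, α < β → ¬ lexRestrict f α α ≤ lexRestrict f α β) (δ : Ordinal.{0}) :
    MonotoneOn (lexRestrict f δ) (H ∩ Ici δ) ∨ AntitoneOn (lexRestrict f δ) (H ∩ Ici δ) := by
  rcases hH with hH | hH
  · refine Or.inl fun η hη η' hη' hle => ?_
    rcases hle.eq_or_lt with rfl | hlt
    · exact le_rfl
    exact lexRestrict_le_lexRestrict_of_le f hη.2 (hH η hη.1 η' hη'.1 hlt)
  · refine Or.inr fun η hη η' hη' hle => ?_
    rcases hle.eq_or_lt with rfl | hlt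
    · exact le_rfl
    exact lexRestrict_le_lexRestrict_of_le f hη.2 (not_le.1 (hH η hη.1 η' hη'.1 hlt)).le

theorem lift_mk_image_lexRestrict_lt {κ : Cardinal.{0}} (hκ : κ.IsStrongLimit)
    {S : Set Ordinal.{0}} (hf : ∀ η ∈ S, f η ∈ piSet A) {δ : Ordinal.{0}} (hδ : δ < κ.ord) :
    #(lexRestrict f δ '' S) < Cardinal.lift.{1} κ := by
  have hcoords : #(coordsIic A δ) ≤ #(Iic δ) :=
    mk_le_of_injective (f := fun a : coordsIic A δ => (⟨((a : ↥A) : Cardinal).ord, a.2⟩ : Iic δ))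
      fun a b h => Subtype.ext (Subtype.ext (ord_injective (congrArg Subtype.val h)))
  have himage : lexRestrict f δ '' S = toLex '' ((fun η => (coordsIic A δ).indicator (f η)) '' S) :=
    (image_image toLex _ S).symm
  rw [himage, mk_image_eq toLex.injective]
  refine lift_mk_lt_of_forall_le_of_eq_zero hκ
    (hcoords.trans_lt (lift_mk_lt_of_subset_Iic hκ.aleph0_le hδ subset_rfl)) hδ ?_
  rintro _ ⟨η, hη, rfl⟩ a
  by_cases ha : a ∈ coordsIic A δ
  · simpa [indicator_of_mem ha, ha] using (hf η hη a).le.trans ha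
  · simp [indicator_of_notMem ha]

end LexRestrict

theorem bddIn_image_of_lift_mk_lt {A : Set Cardinal.{0}} (hA : ∀ a ∈ A, a.IsRegular)
    {f : Ordinal.{0} → ↥A → Ordinal.{0}} {T : Set Ordinal.{0}} (hf : ∀ j ∈ T, f j ∈ piSet A)
    (hsmall : ∀ a : ↥A, #((fun j => f j a) '' T) < Cardinal.lift.{1} (a : Cardinal)) :
    BddIn A (f '' T) := by
  have hlt : ∀ a : ↥A, ∀ x ∈ (fun j => f j a) '' T, x < (a : Cardinal).ord :=
    fun a => forall_mem_image.2 fun j hj => hf j hj a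
  refine ⟨fun a => sSup ((fun j => f j a) '' T),
    fun a => sSup_lt_ord_of_lift_mk_lt (hA a a.2) (hsmall a) (hlt a), ?_⟩
  rintro _ ⟨j, hj, rfl⟩ a
  exact le_csSup ⟨_, fun x hx => (hlt a x hx).le⟩ (mem_image_of_mem _ hj)

theorem exists_forall_exists_lt_bddIn_image {κ : Cardinal.{0}} (hwc : IsWeaklyCompact κ)
    {A : Set Cardinal.{0}} (hA : ∀ a ∈ A, a.IsRegular) (hsub : ∀ a ∈ A, a < κ)
    {C : Set Ordinal.{0}} (hC : IsClubIn C κ.ord) (hCA : ∀ a ∈ A, a.ord ∉ C)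
    {f : Ordinal.{0} → ↥A → Ordinal.{0}} (hf : ∀ ξ < κ.ord, f ξ ∈ piSet A) :
    ∃ T ⊆ Iio κ.ord, (∀ β < κ.ord, ∃ t ∈ T, β < t) ∧ BddIn A (f '' T) := by
  have hκ := hwc.1.isRegular
  obtain ⟨H, hHκ, hH, hhom⟩ :=
    hwc.exists_homogeneous fun α β => lexRestrict f α α ≤ lexRestrict f α β
  have hB : ∀ δ < κ.ord, ∃ B < κ.ord, ∀ η ∈ H ∩ Ici δ, ∀ η' ∈ H ∩ Ici δ, B < η → B < η' →
      lexRestrict f δ η = lexRestrict f δ η' := fun δ hδ =>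
    exists_forall_eq_of_monotoneOn_or_antitoneOn hκ (inter_subset_left.trans hHκ)
      (monotoneOn_or_antitoneOn_lexRestrict f hhom δ)
      (lift_mk_image_lexRestrict_lt f hwc.1.isStrongLimit (fun η hη => hf η (hHκ hη.1)) hδ)
  choose! B hBκ hB using hB
  choose! next hnextC hnext using hC.2.1
  obtain ⟨T, hTH, hTunb, hTsep⟩ := exists_unbounded_subset_forall_lt hκ
    (exists_lt_of_lift_le_mk hκ.aleph0_le hH.ge) (G := fun x => max (B x) (next x))
    fun x hx => max_lt (hBκ x (hHκ hx)) (hC.1 (hnextC x (hHκ hx)))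
  have hTκ : T ⊆ Iio κ.ord := hTH.trans hHκ
  refine ⟨T, hTκ, hTunb, bddIn_image_of_lift_mk_lt hA (fun j hj => hf j (hTκ hj)) fun a => ?_⟩
  have ha := (hA a a.2).aleph0_le
  obtain ⟨γ, hγ, hgap⟩ := hC.exists_gap (ord_lt_ord.2 (hsub a a.2))
    (ord_eq_zero.not.2 (hA a a.2).ne_zero) (hCA a a.2)
  refine lift_mk_image_lt_of_eq_on_tail ha (lift_mk_inter_Iio_ord_lt ha hγ hgap ?_) ?_
  · intro t ht t' ht' hlt
    exact ⟨next t, hnextC t (hTκ ht), hnext t (hTκ ht),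
      (le_max_right _ _).trans_lt (hTsep t ht t' ht' hlt)⟩
  · intro j₀ hj₀ haj₀ j hj j' hj' hj₀j hj₀j'
    refine apply_eq_of_lexRestrict_eq f ?_ haj₀
    exact hB j₀ (hTκ hj₀) j ⟨hTH hj, hj₀j.le⟩ j' ⟨hTH hj', hj₀j'.le⟩
      ((le_max_left _ _).trans_lt (hTsep j₀ hj₀ j hj hj₀j))
      ((le_max_left _ _).trans_lt (hTsep j₀ hj₀ j' hj' hj₀j'))

theorem notMem_spec_of_isClubIn {κ : Cardinal.{0}} (hwc : IsWeaklyCompact κ)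
    {A : Set Cardinal.{0}} (hA : ∀ a ∈ A, a.IsRegular) (hsub : ∀ a ∈ A, a < κ)
    {C : Set Ordinal.{0}} (hC : IsClubIn C κ.ord) (hCA : ∀ a ∈ A, a.ord ∉ C) : κ ∉ spec A := by
  rintro ⟨-, F, hFA, hF, hunbdd⟩
  obtain ⟨e⟩ : Nonempty (Iio κ.ord ≃ F) := by
    rw [← lift_mk_eq', mk_Iio_ordinal, card_ord, hF]
  let f : Ordinal.{0} → ↥A → Ordinal.{0} := fun ξ => if h : ξ < κ.ord then e ⟨ξ, h⟩ else 0
  have hfF : ∀ ξ (h : ξ < κ.ord), f ξ = e ⟨ξ, h⟩ := fun ξ h => dif_pos h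
  have hinj : InjOn f (Iio κ.ord) := fun ξ hξ ζ hζ h => by
    simpa using e.injective (Subtype.ext ((hfF ξ hξ).symm.trans (h.trans (hfF ζ hζ))))
  obtain ⟨T, hTκ, hTunb, hbdd⟩ := exists_forall_exists_lt_bddIn_image hwc hA hsub hC hCA
    fun ξ hξ => hFA (hfF ξ hξ ▸ (e ⟨ξ, hξ⟩).2)
  refine hunbdd (f '' T) ?_ ?_ hbdd
  · rintro _ ⟨ξ, hξ, rfl⟩
    exact hfF ξ (hTκ hξ) ▸ (e ⟨ξ, hTκ hξ⟩).2
  · rw [mk_image_eq_of_injOn _ _ (hinj.mono hTκ),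
      lift_mk_eq_of_forall_exists_lt hwc.1.isRegular hTκ hTunb]

noncomputable def truncatedId (A : Set Cardinal.{0}) (α : Ordinal.{0}) : ↥A → Ordinal.{0} :=
  fun a => if α < (a : Cardinal).ord then α else 0

theorem mem_spec_of_statIn {κ : Cardinal.{0}} (hκ : κ.IsRegular) (hκ₀ : ℵ₀ < κ)
    {A : Set Cardinal.{0}} (hA : ∀ a ∈ A, a.IsRegular) (hunb : ∀ β < κ, ∃ a ∈ A, β < a)
    (hstat : StatIn A κ) : κ ∈ spec A := by
  have hpi : ∀ α, truncatedId A α ∈ piSet A := fun α a => by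
    unfold truncatedId
    split_ifs with h
    exacts [h, ord_pos.2 (hA a a.2).pos]
  have hinj : InjOn (truncatedId A) (Iio κ.ord) := by
    intro α hα β hβ h
    obtain ⟨a, ha, hαa, hβa⟩ : ∃ a ∈ A, α < a.ord ∧ β < a.ord := by
      obtain ⟨a, ha, hlt⟩ := hunb _ (lt_ord.1 (max_lt hα hβ))
      exact ⟨a, ha, (lt_ord.2 hlt).trans_le' (le_max_left α β),
        (lt_ord.2 hlt).trans_le' (le_max_right α β)⟩
    simpa [truncatedId, hαa, hβa] using congrFun h ⟨a, ha⟩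
  refine ⟨hκ, truncatedId A '' Iio κ.ord, image_subset_iff.2 fun α _ => hpi α, ?_, ?_⟩
  · rw [mk_image_eq_of_injOn _ _ hinj, mk_Iio_ordinal, card_ord]
  rintro F₀ hF₀ hcard ⟨h, hh, hbound⟩
  set S := Iio κ.ord ∩ truncatedId A ⁻¹' F₀
  have hSF₀ : truncatedId A '' S = F₀ := by rw [image_inter_preimage, inter_eq_right.2 hF₀]
  have hS : #S = Cardinal.lift κ := by
    rw [← hcard, ← hSF₀, mk_image_eq_of_injOn _ _ (hinj.mono inter_subset_left)]
  obtain ⟨a, ha, -, -, haS⟩ := hstat _ (isClubIn_limitPointsBelow (by rwa [hκ.cof_ord])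
    inter_subset_left (exists_lt_of_lift_le_mk hκ.aleph0_le hS.ge))
  obtain ⟨α, ⟨-, hαF₀⟩, hhα, hαa⟩ := haS _ (hh ⟨a, ha⟩)
  have := hbound _ hαF₀ ⟨a, ha⟩
  simp only [truncatedId, hαa, if_true] at this
  exact this.not_gt hhα

/-- If `κ` is weakly compact and `A ⊆ κ` is an unbounded set of
infinite regular cardinals, then `κ ∈ spec(A)` iff `A` is stationary in `κ`. -/
theorem statement13 (κ : Cardinal.{0}) (hwc : IsWeaklyCompact κ)
    (A : Set Cardinal.{0}) (hA : ∀ a ∈ A, a.IsRegular) (hsub : ∀ a ∈ A, a < κ)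
    (hunb : ∀ β < κ, ∃ a ∈ A, β < a) :
    κ ∈ spec A ↔ StatIn A κ := by
  refine ⟨fun hspec C hC => ?_, mem_spec_of_statIn hwc.1.isRegular hwc.1.aleph0_lt hA hunb⟩
  by_contra! hCA
  exact notMem_spec_of_isClubIn hwc hA hsub hC hCA hspec

end TukeySpec
end

section
/- Let κ be a strongly inaccessible cardinal and let A ⊆ κ be a set of infinite regular cardinals that is unbounded in κ but nonstationary in κ. Then κ ∉ pcf(A): for every ultrafilter D on A, cf(∏A/D) ≠ κ. -/
/-! If `D` concentrates on `{a ≤ μ}` for some `μ < κ`, then the functions vanishing above `μ`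
are cofinal modulo `D`, and there are at most `2 ^ μ < κ` of them. Otherwise `D` contains every
tail of `A`. Fix a club `C` of `κ` missing `A` and a family `(g_i)_{i<κ}` in `∏A`. For `a ∈ A`,
`c(a) = sup (C ∩ a) < a` because `a ∉ C`, so by regularity of `a`,
`f(a) = sup_{i < c(a)} (g_i(a) + 1) < a`. Each `i < κ` lies below some `o ∈ C`, and every
`a > o` has `i < c(a)`, hence `g_i(a) < f(a)`: no `g_i` dominates `f` modulo `D`. -/

universe u

open Cardinal Set

namespace TukeySpec

theorem IsClubIn.sSup_inter_Iio_lt {C : Set Ordinal.{0}} {κ β : Ordinal.{0}}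
    (hC : IsClubIn C κ) (hβκ : β < κ) (hβ : β ≠ 0) (hβC : β ∉ C) :
    sSup (C ∩ Iio β) < β := by
  refine (csSup_le' fun o ho => ho.2.le).lt_of_ne fun hsup => hβC (hC.2.2 β hβκ hβ fun γ hγ => ?_)
  obtain ⟨o, ⟨hoC, hoβ⟩, hγo⟩ := exists_lt_of_lt_csSup' (hsup ▸ hγ)
  exact ⟨o, hoC, hγo, hoβ⟩

theorem mk_Iic_cardinal_le {μ : Cardinal.{0}} (hμ : ℵ₀ ≤ μ) :
    #(Iic μ) ≤ Cardinal.lift.{1} μ := by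
  have hinj : Function.Injective fun c : Iic μ =>
      (⟨c.1.ord, Order.lt_add_one_iff.2 (ord_le_ord.2 c.2)⟩ : Iio (μ.ord + 1)) :=
    fun c d h => Subtype.ext (ord_injective (congrArg Subtype.val h))
  refine (mk_le_of_injective hinj).trans_eq ?_
  rw [mk_Iio_ordinal, Ordinal.card_add_one, card_ord, add_one_eq hμ]

theorem cofUlt_le_mk {A : Set Cardinal.{0}} {D : Ultrafilter A} {S : Set (A → Ordinal.{0})}
    (hSA : S ⊆ piSet A) (hS : ∀ f ∈ piSet A, ∃ g ∈ S, {a : A | f a ≤ g a} ∈ D) :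
    cofUlt A D ≤ #S :=
  csInf_le' ⟨S, hSA, rfl, hS⟩

theorem exists_mk_eq_cofUlt (A : Set Cardinal.{0}) (D : Ultrafilter A) :
    ∃ S ⊆ piSet A, #S = cofUlt A D ∧ ∀ f ∈ piSet A, ∃ g ∈ S, {a : A | f a ≤ g a} ∈ D :=
  csInf_mem (s := {c : Cardinal.{1} | ∃ S ⊆ piSet A, #S = c ∧
    ∀ f ∈ piSet A, ∃ g ∈ S, {a : A | f a ≤ g a} ∈ D})
    ⟨_, piSet A, subset_rfl, rfl, fun f hf =>
      ⟨f, hf, Filter.mem_of_superset Filter.univ_mem fun a _ => show f a ≤ f a from le_rfl⟩⟩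

theorem cofUlt_le_two_power {A : Set Cardinal.{0}} {D : Ultrafilter A} {μ : Cardinal.{0}}
    (hμ : ℵ₀ ≤ μ) (hD : {a : A | (a : Cardinal) ≤ μ} ∈ D) :
    cofUlt A D ≤ Cardinal.lift.{1} (2 ^ μ) := by
  set T := {g ∈ piSet A | ∀ a : A, μ < a → g a = 0}
  have hT : ∀ f ∈ piSet A, ∃ g ∈ T, {a : A | f a ≤ g a} ∈ D := by
    intro f hf
    refine ⟨fun a => if (a : Cardinal) ≤ μ then f a else 0, ⟨fun a => ?_, fun a ha => ?_⟩, ?_⟩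
    · dsimp only
      split_ifs
      exacts [hf a, zero_le.trans_lt (hf a)]
    · simp [not_le.2 ha]
    · exact Filter.mem_of_superset hD fun a ha => by simp [show (a : Cardinal) ≤ μ from ha]
  have hinj : Function.Injective fun (g : T) (a : {a : A // (a : Cardinal) ≤ μ}) =>
      (⟨g.1 a, (g.2.1 a).trans_le (ord_le_ord.2 a.2)⟩ : Iio μ.ord) := by
    rintro ⟨g, hg⟩ ⟨g', hg'⟩ h
    ext a
    show g a = g' a
    by_cases ha : (a : Cardinal) ≤ μ
    · exact congrArg Subtype.val (congrFun h ⟨a, ha⟩)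
    · rw [hg.2 a (not_le.1 ha), hg'.2 a (not_le.1 ha)]
  have hdom : #{a : A // (a : Cardinal) ≤ μ} ≤ Cardinal.lift.{1} μ :=
    (mk_le_of_injective (f := fun a : {a : A // (a : Cardinal) ≤ μ} =>
      (⟨a.1.1, a.2⟩ : Iic μ)) fun a b h => by ext; simpa using congrArg Subtype.val h).trans
      (mk_Iic_cardinal_le hμ)
  calc cofUlt A D ≤ #T := cofUlt_le_mk (fun g hg => hg.1) hT
    _ ≤ #(Iio μ.ord) ^ #{a : A // (a : Cardinal) ≤ μ} :=
      (mk_le_of_injective hinj).trans_eq (power_def _ _).symm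
    _ ≤ Cardinal.lift.{1} μ ^ Cardinal.lift.{1} μ := by
      rw [mk_Iio_ordinal, card_ord]
      exact power_le_power_left (by simpa using (aleph0_pos.trans_le hμ).ne') hdom
    _ = Cardinal.lift.{1} (2 ^ μ) := by rw [← Cardinal.lift_power, power_self_eq hμ]

theorem exists_eventually_gt_of_notMem_club {A : Set Cardinal.{0}} {κ : Cardinal.{0}}
    {C : Set Ordinal.{0}} (hC : IsClubIn C κ.ord) (hCA : ∀ a ∈ A, a.ord ∉ C)
    (hA : ∀ a ∈ A, a.IsRegular) (hsub : ∀ a ∈ A, a < κ)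
    {S : Set (A → Ordinal.{0})} (hSA : S ⊆ piSet A) (hS : #S ≤ Cardinal.lift.{1} κ) :
    ∃ f ∈ piSet A, ∀ g ∈ S, ∃ o < κ.ord, ∀ a : A, o < (a : Cardinal).ord → g a < f a := by
  rw [← card_ord κ, ← mk_Iio_ordinal, Cardinal.le_def] at hS
  obtain ⟨ι⟩ := hS
  set c : A → Ordinal.{0} := fun a => sSup (C ∩ Iio (a : Cardinal).ord)
  have hc : ∀ a : A, c a < (a : Cardinal).ord := fun a =>
    hC.sSup_inter_Iio_lt (ord_lt_ord.2 (hsub a a.2)) (hA a a.2).ord_pos.ne' (hCA a a.2)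
  set F : ∀ a : A, {g : S // (ι g : Ordinal) < c a} → Ordinal.{0} := fun a g => g.1.1 a + 1
  have hF : ∀ a, BddAbove (range (F a)) := fun a =>
    ⟨(a : Cardinal).ord, by rintro _ ⟨g, rfl⟩; exact Order.add_one_le_of_lt (hSA g.1.2 a)⟩
  refine ⟨fun a => ⨆ g, F a g, fun a => ?_, fun g hg => ?_⟩
  · have hcard : #{g : S // (ι g : Ordinal) < c a} ≤ #(Iio (c a)) :=
      mk_le_of_injective (f := fun g => ⟨ι g, g.2⟩)
        fun g h hgh => Subtype.ext (ι.injective (Subtype.ext (Subtype.mk.inj hgh)))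
    apply Ordinal.lift_iSup_add_one_lt_of_lt_cof _ fun g => hSA g.1.2 a
    rw [mk_Iio_ordinal] at hcard
    rw [lift_uzero, ← Ordinal.lift_cof, (hA a a.2).cof_ord]
    exact hcard.trans_lt (Cardinal.lift_lt.2 (lt_ord.1 (hc a)))
  · obtain ⟨o, hoC, hιo⟩ := hC.2.1 _ (ι ⟨g, hg⟩).2
    refine ⟨o, hC.1 hoC, fun a hoa => ?_⟩
    have hgc : (ι ⟨g, hg⟩ : Ordinal) < c a :=
      hιo.trans_le (le_csSup ⟨(a : Cardinal).ord, fun _ h => h.2.le⟩ ⟨hoC, hoa⟩)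
    exact (Order.lt_add_one_iff.2 le_rfl).trans_le (le_ciSup (hF a) ⟨⟨g, hg⟩, hgc⟩)

theorem statement14_general (κ : Cardinal.{0}) (hinacc : κ.IsInaccessible)
    (A : Set Cardinal.{0}) (hA : ∀ a ∈ A, a.IsRegular) (hsub : ∀ a ∈ A, a < κ)
    (hns : ¬ StatIn A κ) :
    κ ∉ pcf A := by
  rintro ⟨D, hD⟩
  obtain ⟨C, hC, hCA⟩ : ∃ C, IsClubIn C κ.ord ∧ ∀ a ∈ A, a.ord ∉ C := by
    simpa [StatIn] using hns
  obtain ⟨S, hSA, hS, hScof⟩ := exists_mk_eq_cofUlt A D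
  by_cases hbdd : ∃ o < κ.ord, {a : A | (a : Cardinal) ≤ o.card} ∈ D
  · obtain ⟨o, hoκ, hoD⟩ := hbdd
    have hμκ : 2 ^ max o.card ℵ₀ < κ :=
      hinacc.isStrongPrelimit (max_lt (lt_ord.1 hoκ) hinacc.aleph0_lt)
    have hle := cofUlt_le_two_power (le_max_right o.card ℵ₀)
      (Filter.mem_of_superset hoD fun a (ha : (a : Cardinal) ≤ o.card) => le_max_of_le_left ha)
    rw [← hD, Cardinal.lift_le] at hle
    exact not_lt_of_ge hle hμκ
  · push Not at hbdd
    obtain ⟨f, hf, hfS⟩ :=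
      exists_eventually_gt_of_notMem_club hC hCA hA hsub hSA (hS.trans hD.symm).le
    obtain ⟨g, hgS, hfg⟩ := hScof f hf
    obtain ⟨o, hoκ, hgf⟩ := hfS g hgS
    have htail : {a : A | o < (a : Cardinal).ord} ∈ D := by
      simpa [compl_ofPred, Cardinal.lt_ord] using D.compl_mem_iff_notMem.2 (hbdd o hoκ)
    obtain ⟨a, hfa, hoa⟩ := Ultrafilter.nonempty_of_mem (Filter.inter_mem hfg htail)
    exact (hfa.trans_lt (hgf a hoa)).false

/-- If `κ` is strongly inaccessible and `A ⊆ κ` is an unbounded,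
nonstationary set of infinite regular cardinals, then `κ ∉ pcf(A)`. -/
theorem statement14 (κ : Cardinal.{0}) (hinacc : κ.IsInaccessible)
    (A : Set Cardinal.{0}) (hA : ∀ a ∈ A, a.IsRegular) (hsub : ∀ a ∈ A, a < κ)
    (hunb : ∀ β < κ, ∃ a ∈ A, β < a) (hns : ¬ StatIn A κ) :
    κ ∉ pcf A :=
  statement14_general κ hinacc A hA hsub hns

end TukeySpec
end

section
/- Let A be a set of infinite regular cardinals with no maximum element, let κ be a regular cardinal with κ ∈ spec(A) and κ ≥ sup(A), and let F ⊆ ∏A be any witness that κ ∈ spec(A) (that is, |F| = κ and every subfamily of F of size κ is unbounded in (∏A, ≤)). Then for every F₀ ⊆ F with |F₀| = κ, the set ub(F₀) of unbounded coordinates of F₀ is infinite. -/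
universe u

open Cardinal Set

namespace TukeySpec

/-!
If `ub(F₀)` were finite, apply the pigeonhole principle at each of its finitely many
coordinates `a`: since `a < κ` and `κ` is regular, `κ` members of the family share one value
at `a`. Shrinking `F₀` once per coordinate leaves a `κ`-sized subfamily that is bounded at every
coordinate of `ub(F₀)`, and it is bounded elsewhere because `F₀` already is; so it is bounded in
`∏A`, against the choice of `F`.
-/

def BddAt (A : Set Cardinal.{0}) (S : Set (↥A → Ordinal.{0})) (a : ↥A) : Prop :=
  ∃ β < (a : Cardinal).ord, ∀ f ∈ S, f a ≤ β

theorem BddAt.mono {A : Set Cardinal.{0}} {S T : Set (↥A → Ordinal.{0})} {a : ↥A}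
    (h : BddAt A T a) (hST : S ⊆ T) : BddAt A S a :=
  let ⟨β, hβ, hT⟩ := h
  ⟨β, hβ, fun f hf => hT f (hST hf)⟩

theorem bddAt_of_notMem_ub {A : Set Cardinal.{0}} {S : Set (↥A → Ordinal.{0})} {a : ↥A}
    (ha : a ∉ ub A S) : BddAt A S a := by
  simpa [ub, BddAt] using ha

theorem bddIn_of_forall_bddAt {A : Set Cardinal.{0}} {S : Set (↥A → Ordinal.{0})}
    (h : ∀ a, BddAt A S a) : BddIn A S := by
  choose β hβ hS using h
  exact ⟨β, hβ, fun f hf a => hS a f hf⟩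

theorem exists_subset_mk_eq_bddAt {A : Set Cardinal.{0}} {κ : Cardinal.{0}} (hκ : κ.IsRegular)
    {G : Set (↥A → Ordinal.{0})} (hG : G ⊆ piSet A) (hGκ : #G = lift.{1} κ) {a : ↥A}
    (ha : (a : Cardinal) < κ) : ∃ G' ⊆ G, #G' = lift.{1} κ ∧ BddAt A G' a := by
  have hfew : #(Iio (a : Cardinal).ord) < (lift.{1} κ).ord.cof := by
    rw [hκ.lift.cof_ord, Cardinal.mk_Iio_ordinal, card_ord]
    exact lift_lt.2 ha
  obtain ⟨β, G', hG', hle, hconst⟩ := infinite_pigeonhole_set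
    (fun f : G => (⟨f.1 a, hG f.2 a⟩ : Iio (a : Cardinal).ord)) (lift.{1} κ) hGκ.ge
    hκ.lift.aleph0_le hfew
  refine ⟨G', hG', le_antisymm ((mk_le_mk_of_subset hG').trans_eq hGκ) hle, β, β.2, ?_⟩
  exact fun f hf => (congrArg Subtype.val (hconst hf)).le

theorem exists_subset_mk_eq_forall_bddAt {A : Set Cardinal.{0}} {κ : Cardinal.{0}}
    (hκ : κ.IsRegular) {t : Set ↥A} (ht : t.Finite) (hlt : ∀ a ∈ t, (a : Cardinal) < κ)
    {G : Set (↥A → Ordinal.{0})} (hG : G ⊆ piSet A) (hGκ : #G = lift.{1} κ) :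
    ∃ G' ⊆ G, #G' = lift.{1} κ ∧ ∀ a ∈ t, BddAt A G' a := by
  induction t, ht using Set.Finite.induction_on generalizing G with
  | empty => exact ⟨G, subset_rfl, hGκ, by simp⟩
  | @insert a t _ _ ih =>
    obtain ⟨G₁, hG₁, hG₁κ, hbdd₁⟩ :=
      ih (fun b hb => hlt b (mem_insert_of_mem a hb)) hG hGκ
    obtain ⟨G₂, hG₂, hG₂κ, hbdd₂⟩ :=
      exists_subset_mk_eq_bddAt hκ (hG₁.trans hG) hG₁κ (hlt a (mem_insert a t))
    refine ⟨G₂, hG₂.trans hG₁, hG₂κ, ?_⟩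
    rintro b (rfl | hb)
    · exact hbdd₂
    · exact (hbdd₁ b hb).mono hG₂

theorem statement15_general (A : Set Cardinal.{0})
    (hbdd : BddAbove A) (hnomax : ∀ a ∈ A, ∃ b ∈ A, a < b)
    (κ : Cardinal.{0}) (hreg : κ.IsRegular) (hsup : sSup A ≤ κ)
    (F : Set (↥A → Ordinal.{0})) (hF : F ⊆ piSet A)
    (hwit : ∀ F₀ ⊆ F, #F₀ = Cardinal.lift.{1} κ → ¬ BddIn A F₀) :
    ∀ F₀ ⊆ F, #F₀ = Cardinal.lift.{1} κ → (ub A F₀).Infinite := by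
  intro F₀ hF₀ hF₀κ hfin
  have hlt : ∀ a : ↥A, (a : Cardinal) < κ := fun a =>
    let ⟨b, hb, hab⟩ := hnomax a a.2
    hab.trans_le ((le_csSup hbdd hb).trans hsup)
  obtain ⟨G, hG, hGκ, hbddAt⟩ := exists_subset_mk_eq_forall_bddAt hreg hfin
    (fun a _ => hlt a) (hF₀.trans hF) hF₀κ
  refine hwit G (hG.trans hF₀) hGκ (bddIn_of_forall_bddAt fun a => ?_)
  by_cases ha : a ∈ ub A F₀
  · exact hbddAt a ha
  · exact (bddAt_of_notMem_ub ha).mono hG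

/-- If `A` has no maximum, `κ ∈ spec(A)` is regular with
`κ ≥ sup A`, and `F` is any witness that `κ ∈ spec(A)`, then every `κ`-sized
subfamily of `F` has infinitely many unbounded coordinates. -/
theorem statement15 (A : Set Cardinal.{0}) (hA : ∀ a ∈ A, a.IsRegular)
    (hbdd : BddAbove A) (hnomax : ∀ a ∈ A, ∃ b ∈ A, a < b)
    (κ : Cardinal.{0}) (hreg : κ.IsRegular) (hsup : sSup A ≤ κ)
    (F : Set (↥A → Ordinal.{0})) (hF : F ⊆ piSet A)
    (hcard : #F = Cardinal.lift.{1} κ)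
    (hwit : ∀ F₀ ⊆ F, #F₀ = Cardinal.lift.{1} κ → ¬ BddIn A F₀) :
    ∀ F₀ ⊆ F, #F₀ = Cardinal.lift.{1} κ → (ub A F₀).Infinite :=
  statement15_general A hbdd hnomax κ hreg hsup F hF hwit

end TukeySpec
end

section
/- Let A be a set of infinite regular cardinals with no maximum element such that sup(A) is a strong limit cardinal. Then every regular cardinal λ ∈ spec(A) with λ ≥ sup(A) belongs to spec*(A). -/
universe u

open Cardinal Set

namespace TukeySpec

/-- If `A` has no maximum and `sup A` is a strong limit cardinal,
then every regular `l ∈ spec(A)` with `l ≥ sup A` belongs to `spec*(A)`. -/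
theorem statement16 (A : Set Cardinal.{0}) (hA : ∀ a ∈ A, a.IsRegular)
    (hbdd : BddAbove A) (hnomax : ∀ a ∈ A, ∃ b ∈ A, a < b)
    (hsl : (sSup A).IsStrongLimit)
    (l : Cardinal.{0}) (hreg : l.IsRegular) (hl : l ∈ spec A)
    (hge : sSup A ≤ l) :
    specStarMem A l := by
  obtain ⟨-, F, hFsub, hFcard, hFunb⟩ := hl
  refine ⟨hreg, F, hFsub, hFcard, ?_⟩
  intro F₀ hF₀F hF₀card β₀ hβ₀
  by_contra hcon
  push_neg at hcon
  -- sup A is bigger than ℵ₀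
  have hAne : A.Nonempty := by
    by_contra h
    rw [not_nonempty_iff_eq_empty] at h
    subst h
    simpa [csSup_empty] using hsl.ne_zero
  obtain ⟨a0, ha0⟩ := hAne
  obtain ⟨b0, hb0A, hab0⟩ := hnomax a0 ha0
  have haleph : ℵ₀ < sSup A :=
    lt_of_le_of_lt (hA a0 ha0).aleph0_le (lt_of_lt_of_le hab0 (le_csSup hbdd hb0A))
  set β : Cardinal.{0} := max β₀ ℵ₀ with hβdef
  have hβ : β < sSup A := max_lt hβ₀ haleph
  set δ : Cardinal.{0} := 2 ^ β with hδdef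
  have hβδ : β < δ := cantor β
  have hδinf : ℵ₀ ≤ δ := le_trans (le_max_right _ _) hβδ.le
  have hδ : δ < sSup A := hsl.two_power_lt hβ
  have h2δ : 2 ^ δ < sSup A := hsl.two_power_lt hδ
  -- coordinates above β₀ are bounded for F₀
  have hbig : ∀ a : ↥A, ¬ (a : Cardinal) ≤ β₀ →
      ∃ γ, γ < (a : Cardinal).ord ∧ ∀ f ∈ F₀, f a ≤ γ := by
    intro a ha
    have hnub : a ∉ ub A F₀ := fun h => ha (hcon a h)
    simp only [ub, mem_setOf_eq] at hnub
    push_neg at hnub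
    exact hnub
  choose γfun hγ1 hγ2 using hbig
  set S : Set ↥A := {a | (a : Cardinal) ≤ β₀} with hSdef
  set T := (∀ a : ↥S, (Set.Iio ((a.1 : Cardinal).ord))) with hTdef
  have hmemlt : ∀ (f : ↥F₀) (a : ↥S), f.1 a.1 < ((a.1 : Cardinal)).ord := by
    intro f a
    exact hFsub (hF₀F f.2) a.1
  set ρ : ↥F₀ → T := fun f a => ⟨f.1 a.1, hmemlt f a⟩ with hρdef
  -- cardinality of S
  have hS : #↥S ≤ Cardinal.lift.{1} δ := by
    have hinj : Function.Injective (fun a : ↥S =>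
        (⟨((a.1 : Cardinal)).ord, by
          exact Cardinal.ord_lt_ord.2 (lt_of_le_of_lt (le_trans a.2 (le_max_left _ _)) hβδ)⟩ :
          Set.Iio δ.ord)) := by
      intro a b h
      apply Subtype.ext
      apply Subtype.ext
      exact Cardinal.ord_injective (congrArg Subtype.val h)
    calc #↥S ≤ #(Set.Iio δ.ord) := Cardinal.mk_le_of_injective hinj
      _ = Cardinal.lift.{1} δ.ord.card := Ordinal.mk_Iio_ordinal δ.ord
      _ = Cardinal.lift.{1} δ := by rw [Cardinal.card_ord]
  -- cardinality of T
  have hTle : #T ≤ Cardinal.lift.{1} (2 ^ δ) := by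
    calc #T = Cardinal.prod (fun a : ↥S => #(Set.Iio ((a.1 : Cardinal).ord))) :=
          Cardinal.mk_pi _
      _ ≤ Cardinal.prod (fun _ : ↥S => Cardinal.lift.{1} δ) := by
          apply Cardinal.prod_le_prod
          intro a
          rw [Ordinal.mk_Iio_ordinal, Cardinal.card_ord]
          exact Cardinal.lift_le.2
            (le_of_lt (lt_of_le_of_lt (le_trans a.2 (le_max_left _ _)) hβδ))
      _ = Cardinal.lift.{1} δ ^ #↥S := Cardinal.prod_const' _ _
      _ ≤ Cardinal.lift.{1} δ ^ Cardinal.lift.{1} δ := by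
          apply Cardinal.power_le_power_left _ hS
          simpa using (lt_of_lt_of_le Cardinal.aleph0_pos hδinf).ne'
      _ = Cardinal.lift.{1} (δ ^ δ) := (Cardinal.lift_power _ _).symm
      _ = Cardinal.lift.{1} (2 ^ δ) := by rw [Cardinal.power_self_eq hδinf]
  have hTlt : #T < Cardinal.lift.{1} l :=
    lt_of_le_of_lt hTle (Cardinal.lift_lt.2 (lt_of_lt_of_le h2δ hge))
  have hreglift : (Cardinal.lift.{1} l).IsRegular := by
    constructor
    · exact Cardinal.aleph0_le_lift.2 hreg.aleph0_le
    · rw [← Cardinal.lift_ord, ← Ordinal.lift_cof]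
      exact Cardinal.lift_le.2 hreg.2
  -- find a big fiber
  have hfiber : ∃ t : T, ¬ #(ρ ⁻¹' {t}) < Cardinal.lift.{1} l := by
    by_contra h
    push_neg at h
    have heq : #↥F₀ = Cardinal.sum fun t : T => #(ρ ⁻¹' {t}) := by
      rw [← Cardinal.mk_sigma]
      exact Cardinal.mk_congr (Equiv.sigmaFiberEquiv ρ).symm
    have hlt := Cardinal.sum_lt_of_isRegular hreglift hTlt h
    rw [← heq, hF₀card] at hlt
    exact lt_irrefl _ hlt
  obtain ⟨t, ht⟩ := hfiber
  set F₁ : Set (↥A → Ordinal.{0}) := Subtype.val '' (ρ ⁻¹' {t}) with hF₁def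
  have hF₁F₀ : F₁ ⊆ F₀ := by
    rintro f ⟨g, _, rfl⟩
    exact g.2
  have hF₁F : F₁ ⊆ F := fun f hf => hF₀F (hF₁F₀ hf)
  have hF₁card : #↥F₁ = Cardinal.lift.{1} l := by
    apply le_antisymm
    · exact hF₀card ▸ Cardinal.mk_le_mk_of_subset hF₁F₀
    · rw [hF₁def, Cardinal.mk_image_eq Subtype.val_injective]
      exact not_lt.1 ht
  have hF₁ne : F₁.Nonempty := by
    rw [← Set.nonempty_coe_sort, ← Cardinal.mk_ne_zero_iff, hF₁card]
    simp [Cardinal.lift_eq_zero]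
    exact (lt_of_lt_of_le Cardinal.aleph0_pos hreg.aleph0_le).ne'
  obtain ⟨f₀, hf₀⟩ := hF₁ne
  apply hFunb F₁ hF₁F hF₁card
  refine ⟨fun a => if hc : (a : Cardinal) ≤ β₀ then f₀ a else γfun a hc, ?_, ?_⟩
  · intro a
    by_cases hc : (a : Cardinal) ≤ β₀
    · simpa only [dif_pos hc] using hFsub (hF₁F hf₀) a
    · simpa only [dif_neg hc] using hγ1 a hc
  · intro f hf a
    obtain ⟨g, hg, rfl⟩ := hf
    obtain ⟨g₀, hg₀, hval₀⟩ := hf₀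
    by_cases hc : (a : Cardinal) ≤ β₀
    · simp only [dif_pos hc]
      have e1 : ρ g = t := hg
      have e0 : ρ g₀ = t := hg₀
      have : g.1 a = g₀.1 a := by
        have h1 := congrFun e1 ⟨a, hc⟩
        have h0 := congrFun e0 ⟨a, hc⟩
        have := h1.trans h0.symm
        exact congrArg Subtype.val this
      rw [this, hval₀]
    · simp only [dif_neg hc]
      exact hγ2 a hc g.1 g.2

end TukeySpec
end

section
/- Let μ be a singular cardinal, let ⟨μ_i : i < cf(μ)⟩ be a strictly increasing sequence of regular cardinals cofinal in μ, and set A = {μ_i : i < cf(μ)}. Suppose ⟨f_ν : ν < ρ⟩ is a sequence of functions in ∏A that is increasing and cofinal modulo the ideal of bounded subsets of A (for ν < ν' there is i₀ < cf(μ) with f_ν(μ_i) < f_{ν'}(μ_i) for all i ≥ i₀, and for every g ∈ ∏A there are ν < ρ and i₀ < cf(μ) with g(μ_i) ≤ f_ν(μ_i) for all i ≥ i₀), where ρ is a regular cardinal. Then ρ ∈ spec*(A). -/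
/-!
The family `F = {f ν : ν < ρ}` has size `ρ`, since the `f ν` are strictly increasing modulo
bounded sets. If some `ρ`-sized `F₀ ⊆ F` had `ub(F₀)` bounded by `β < sup A`, then `F₀` would be
pointwise bounded above `β` by some `g ∈ ∏A`. Some `f ν'` dominates `g` eventually, and since
the indices of `F₀` are cofinal in `ρ`, some `f ν ∈ F₀` with `ν > ν'` is eventually above
`f ν' ≥ g ≥ f ν`, which is absurd at a large enough coordinate.
-/

universe u

open Cardinal Set

namespace TukeySpec

theorem injOn_of_eventually_lt {α ι β : Type*} [LinearOrder α] [Preorder β] {l : Filter ι}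
    [l.NeBot] {f : α → ι → β} {s : Set α}
    (h : ∀ x ∈ s, ∀ y ∈ s, x < y → ∀ᶠ i in l, f x i < f y i) : InjOn f s := by
  intro x hx y hy hxy
  by_contra hne
  rcases lt_or_gt_of_ne hne with hlt | hlt
  · obtain ⟨i, hi⟩ := (h x hx y hy hlt).exists
    exact (congrFun hxy i ▸ hi).false
  · obtain ⟨i, hi⟩ := (h y hy x hx hlt).exists
    exact (congrFun hxy i ▸ hi).false

theorem eventually_atTop_of_exists_lt {α : Type*} [Preorder α] {A : Set α} {μ : α}
    (hA : ∀ b < μ, ∃ a : ↥A, b < a) {P : ↥A → Prop} (h : ∃ b < μ, ∀ a : ↥A, b ≤ (a : α) → P a) :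
    ∀ᶠ a in Filter.atTop, P a := by
  obtain ⟨b, hb, hP⟩ := h
  obtain ⟨a₀, hba₀⟩ := hA b hb
  exact (Filter.eventually_ge_atTop a₀).mono fun a ha => hP a (hba₀.le.trans ha)

theorem exists_mem_gt_of_frequently_atTop {α : Type*} [ConditionallyCompleteLinearOrderBot α]
    {A : Set α} {S : Set ↥A} (hS : ∃ᶠ a in Filter.atTop, a ∈ S) {β : α} (hβ : β < sSup A) :
    ∃ a ∈ S, β < (a : α) := by
  obtain ⟨a₀, ha₀, hβa₀⟩ := exists_lt_of_lt_csSup' hβ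
  obtain ⟨a, ha₀a, haS⟩ := hS.forall_exists_of_atTop ⟨a₀, ha₀⟩
  exact ⟨a, haS, hβa₀.trans_le ha₀a⟩

theorem exists_gt_index_mem_of_mk_eq {X : Type*} {ρ : Cardinal.{0}} (hρ : ℵ₀ ≤ ρ)
    {f : Ordinal.{0} → X} {F₀ : Set X} (hF₀ : F₀ ⊆ f '' Iio ρ.ord)
    (hcard : #F₀ = lift ρ) {ν : Ordinal.{0}} (hν : ν < ρ.ord) :
    ∃ ν' < ρ.ord, ν < ν' ∧ f ν' ∈ F₀ := by
  by_contra! hbdd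
  have hsub : F₀ ⊆ f '' Iio (Order.succ ν) := by
    intro x hx
    obtain ⟨ν', hν', rfl⟩ := hF₀ hx
    exact ⟨ν', Order.lt_succ_iff.mpr (not_lt.mp fun h => hbdd ν' hν' h hx), rfl⟩
  have hsmall : (Order.succ ν).card < ρ := lt_ord.mp ((isSuccLimit_ord hρ).succ_lt hν)
  have := (lift_le.{1}.mpr (mk_le_mk_of_subset hsub)).trans mk_image_le_lift
  rw [hcard, mk_Iio_ordinal] at this
  simp only [lift_lift, lift_le] at this
  exact this.not_gt hsmall

theorem exists_mem_piSet_le_off_ub {A : Set Cardinal.{0}} (F₀ : Set (↥A → Ordinal.{0}))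
    {g₀ : ↥A → Ordinal.{0}} (hg₀ : g₀ ∈ piSet A) :
    ∃ g ∈ piSet A, ∀ a ∉ ub A F₀, ∀ x ∈ F₀, x a ≤ g a := by
  have hbound : ∀ a ∉ ub A F₀, ∃ γ < (a : Cardinal).ord, ∀ x ∈ F₀, x a ≤ γ := by
    intro a ha
    simpa [ub] using ha
  classical
  refine ⟨fun a => if ha : a ∈ ub A F₀ then g₀ a else (hbound a ha).choose, fun a => ?_,
    fun a ha x hx => ?_⟩
  · dsimp only
    split_ifs with ha
    exacts [hg₀ a, (hbound a ha).choose_spec.1]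
  · simpa only [dif_neg ha] using (hbound a ha).choose_spec.2 x hx

theorem frequently_mem_ub {A : Set Cardinal.{0}} {l : Filter ↥A} [l.NeBot] {ρ : Cardinal.{0}}
    (hρ : ℵ₀ ≤ ρ) {f : Ordinal.{0} → ↥A → Ordinal.{0}} (hmem : ∀ ν < ρ.ord, f ν ∈ piSet A)
    (hincr : ∀ ν ν', ν < ν' → ν' < ρ.ord → ∀ᶠ a in l, f ν a < f ν' a)
    (hcofinal : ∀ g ∈ piSet A, ∃ ν < ρ.ord, ∀ᶠ a in l, g a ≤ f ν a)
    {F₀ : Set (↥A → Ordinal.{0})} (hF₀ : F₀ ⊆ f '' Iio ρ.ord) (hcard : #F₀ = lift ρ) :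
    ∃ᶠ a in l, a ∈ ub A F₀ := by
  intro hnot
  obtain ⟨g, hg, hgF₀⟩ :=
    exists_mem_piSet_le_off_ub F₀ (hmem 0 (ord_pos.mpr (aleph0_pos.trans_le hρ)))
  obtain ⟨ν', hν', hgν'⟩ := hcofinal g hg
  obtain ⟨ν, hν, hν'ν, hνF₀⟩ := exists_gt_index_mem_of_mk_eq hρ hF₀ hcard hν'
  obtain ⟨a, ha, hga, hlt⟩ := (hnot.and (hgν'.and (hincr ν' ν hν'ν hν))).exists
  exact ((hgF₀ a ha _ hνF₀).trans hga).not_gt hlt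

theorem statement17_general (μ : Cardinal.{0}) (hinf : ℵ₀ ≤ μ)
    (m : Ordinal.{0} → Cardinal.{0})
    (hmcof : ∀ ν < μ, ∃ i < μ.ord.cof.ord, ν < m i)
    (A : Set Cardinal.{0}) (hA : A = {a | ∃ i < μ.ord.cof.ord, a = m i})
    (ρ : Cardinal.{0}) (hρ : ρ.IsRegular)
    (f : Ordinal.{0} → (↥A → Ordinal.{0}))
    (hmem : ∀ ν < ρ.ord, f ν ∈ piSet A)
    (hincr : ∀ ν ν' : Ordinal.{0}, ν < ν' → ν' < ρ.ord →
      ∃ b < μ, ∀ a : ↥A, b ≤ (a : Cardinal) → f ν a < f ν' a)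
    (hcofinal : ∀ g ∈ piSet A, ∃ ν < ρ.ord, ∃ b < μ,
      ∀ a : ↥A, b ≤ (a : Cardinal) → g a ≤ f ν a) :
    specStarMem A ρ := by
  have hAcof : ∀ b < μ, ∃ a : ↥A, b < a := fun b hb => by
    obtain ⟨i, hi, hbi⟩ := hmcof b hb
    exact ⟨⟨m i, hA ▸ ⟨i, hi, rfl⟩⟩, hbi⟩
  have : Nonempty ↥A := (hAcof 0 (aleph0_pos.trans_le hinf)).nonempty
  have hincr' (ν ν') (h : ν < ν') (h' : ν' < ρ.ord) : ∀ᶠ a in Filter.atTop, f ν a < f ν' a :=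
    eventually_atTop_of_exists_lt hAcof (hincr ν ν' h h')
  have hcofinal' (g) (hg : g ∈ piSet A) : ∃ ν < ρ.ord, ∀ᶠ a in Filter.atTop, g a ≤ f ν a := by
    obtain ⟨ν, hν, h⟩ := hcofinal g hg
    exact ⟨ν, hν, eventually_atTop_of_exists_lt hAcof h⟩
  have hinj : InjOn f (Iio ρ.ord) :=
    injOn_of_eventually_lt (l := Filter.atTop) fun ν _ ν' hν' h => hincr' ν ν' h hν'
  refine ⟨hρ, f '' Iio ρ.ord, image_subset_iff.mpr hmem, ?_, fun F₀ hF₀ hcard β hβ => ?_⟩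
  · rw [mk_image_eq_of_injOn _ _ hinj, mk_Iio_ordinal, card_ord]
  · exact exists_mem_gt_of_frequently_atTop
      (frequently_mem_ub hρ.aleph0_le hmem hincr' hcofinal' hF₀ hcard) hβ

/-- If `⟨m i : i < cf(μ)⟩` is a strictly increasing sequence of
regular cardinals cofinal in the singular cardinal `μ`, `A` is its range, and
`⟨f ν : ν < ρ⟩` is increasing and cofinal in `∏A` modulo the ideal of bounded
subsets of `A`, with `ρ` regular, then `ρ ∈ spec*(A)`. -/
theorem statement17 (μ : Cardinal.{0}) (hinf : ℵ₀ ≤ μ) (hsing : ¬ μ.IsRegular)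
    (m : Ordinal.{0} → Cardinal.{0})
    (hmreg : ∀ i < μ.ord.cof.ord, (m i).IsRegular)
    (hmono : ∀ i j : Ordinal.{0}, i < j → j < μ.ord.cof.ord → m i < m j)
    (hmlt : ∀ i < μ.ord.cof.ord, m i < μ)
    (hmcof : ∀ ν < μ, ∃ i < μ.ord.cof.ord, ν < m i)
    (A : Set Cardinal.{0}) (hA : A = {a | ∃ i < μ.ord.cof.ord, a = m i})
    (ρ : Cardinal.{0}) (hρ : ρ.IsRegular)
    (f : Ordinal.{0} → (↥A → Ordinal.{0}))
    (hmem : ∀ ν < ρ.ord, f ν ∈ piSet A)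
    (hincr : ∀ ν ν' : Ordinal.{0}, ν < ν' → ν' < ρ.ord →
      ∃ b < μ, ∀ a : ↥A, b ≤ (a : Cardinal) → f ν a < f ν' a)
    (hcofinal : ∀ g ∈ piSet A, ∃ ν < ρ.ord, ∃ b < μ,
      ∀ a : ↥A, b ≤ (a : Cardinal) → g a ≤ f ν a) :
    specStarMem A ρ :=
  statement17_general μ hinf m hmcof A hA ρ hρ f hmem hincr hcofinal

end TukeySpec
end

section
/- Let A be a set of infinite regular cardinals and λ a regular cardinal with λ ∈ spec(A). Then either λ ≤ cf(∏A/J_bd), or there exists ā < sup(A) such that λ ∈ spec({a ∈ A : a ≤ ā}). In particular, if λ ∈ spec*(A), then λ ≤ cf(∏A/J_bd). -/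
universe u

open Cardinal Set

namespace TukeySpec

/-!
If `cf(∏A/J_bd) < λ`, fix a family `S` witnessing this cofinality. A diagonal argument shows
`sup A ≤ |S|`: otherwise, on the coordinates `a > |S|` the supremum of `S` stays below the regular
cardinal `a`, and raising it by one gives a function that no member of `S` dominates on a tail.
Each member of a `λ`-sized family `F` is dominated above some `b < sup A` by some `g ∈ S`; there are
fewer than `λ` such pairs `(g, b)`, so by regularity one pair serves a `λ`-sized subfamily `F'`.
This contradicts `λ ∈ spec*(A)` directly. For `λ ∈ spec(A)`, gluing a bound on the coordinates
`≤ b` with `g` bounds a subfamily of `F'` in `∏A`, so the restrictions of `F'` to `{a ∈ A | a ≤ b}`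
witness `λ ∈ spec({a ∈ A | a ≤ b})`.
-/

def DominatesAbove (A : Set Cardinal.{0}) (b : Cardinal.{0}) (g f : ↥A → Ordinal.{0}) : Prop :=
  ∀ a : ↥A, b < (a : Cardinal) → f a ≤ g a

lemma exists_subset_mk_eq_of_mapsTo {α ι : Type u} {κ : Cardinal.{u}} (hκ : κ.IsRegular)
    {s : Set α} (hs : #s = κ) {m : α → ι} {I : Set ι} (hm : MapsTo m s I) (hI : #I < κ) :
    ∃ t ⊆ s, #t = κ ∧ ∃ i, ∀ x ∈ t, m x = i := by
  obtain ⟨i, t, hts, hκt, hti⟩ := infinite_pigeonhole_set (fun x : s => (⟨m x, hm x.2⟩ : I)) κ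
    hs.ge hκ.aleph0_le (by rwa [hκ.cof_ord])
  exact ⟨t, hts, ((mk_le_mk_of_subset hts).trans_eq hs).antisymm hκt, i,
    fun x hx => congrArg Subtype.val (hti hx)⟩

lemma nonempty_of_mk_eq {α : Type u} {s : Set α} {κ : Cardinal.{u}} (hκ : κ.IsRegular)
    (hs : #s = κ) : s.Nonempty := by
  rw [← nonempty_coe_sort, ← mk_ne_zero_iff, hs]
  exact hκ.pos.ne'

section

variable {A : Set Cardinal.{0}}

lemma nonempty_of_one_lt_mk {β : Type*} {F : Set (↥A → β)} (hF : 1 < #F) : A.Nonempty := by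
  by_contra hA
  rw [not_nonempty_iff_eq_empty] at hA
  subst hA
  exact hF.not_ge (mk_le_one_iff_set_subsingleton.2 subsingleton_of_subsingleton)

lemma exists_mk_eq_cofJbd (hσ : 0 < sSup A) :
    ∃ S ⊆ piSet A, #S = cofJbd A ∧
      ∀ f ∈ piSet A, ∃ g ∈ S, ∃ b < sSup A, DominatesAbove A b g f := by
  have : cofJbd A ∈ {c | ∃ S ⊆ piSet A, #S = c ∧
      ∀ f ∈ piSet A, ∃ g ∈ S, ∃ b < sSup A, DominatesAbove A b g f} :=
    csInf_mem ⟨_, piSet A, subset_rfl, rfl, fun f hf => ⟨f, hf, 0, hσ, fun _ _ => le_rfl⟩⟩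
  exact this

lemma exists_gt_on_coords_gt_mk (hA : ∀ a ∈ A, a.IsRegular) {S : Set (↥A → Ordinal.{0})}
    (hS : S ⊆ piSet A) :
    ∃ f ∈ piSet A, ∀ g ∈ S, ∀ a : ↥A, #S < Cardinal.lift.{1} (a : Cardinal) → g a < f a := by
  classical
  have hsucc (a : ↥A) (g : S) : Order.succ (g.1 a) < (a : Cardinal).ord :=
    (isSuccLimit_ord (hA a a.2).aleph0_le).succ_lt (hS g.2 a)
  refine ⟨fun a => if #S < Cardinal.lift.{1} (a : Cardinal) then ⨆ g : S, Order.succ (g.1 a)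
    else 0, fun a => ?_, fun g hg a ha => ?_⟩
  · dsimp only
    split_ifs with hlt
    · exact Ordinal.lift_iSup_lt_of_lt_cof (by simpa [(hA a a.2).lift.cof_ord] using hlt) (hsucc a)
    · exact ord_pos.2 (hA a a.2).pos
  · have hbdd : BddAbove (range fun g : S => Order.succ (g.1 a)) :=
      ⟨_, forall_mem_range.2 fun g => (hsucc a g).le⟩
    dsimp only
    rw [if_pos ha]
    exact (Order.lt_succ _).trans_le (le_ciSup hbdd ⟨g, hg⟩)

lemma lift_sSup_le_mk_of_cofinal (hA : ∀ a ∈ A, a.IsRegular) {S : Set (↥A → Ordinal.{0})}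
    (hS : S ⊆ piSet A) (hcof : ∀ f ∈ piSet A, ∃ g ∈ S, ∃ b < sSup A, DominatesAbove A b g f) :
    Cardinal.lift.{1} (sSup A) ≤ #S := by
  by_contra! hlt
  obtain ⟨κ, hκ⟩ := mem_range_lift_of_le hlt.le
  obtain ⟨f, hf, hfS⟩ := exists_gt_on_coords_gt_mk hA hS
  obtain ⟨g, hg, b, hb, hdom⟩ := hcof f hf
  have hκσ : κ < sSup A := lift_lt.1 (hκ.trans_lt hlt)
  obtain ⟨a, haA, hba⟩ := exists_lt_of_lt_csSup' (max_lt hb hκσ)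
  rw [max_lt_iff] at hba
  exact (hdom ⟨a, haA⟩ hba.1).not_gt (hfS g hg ⟨a, haA⟩ (by rw [← hκ, lift_lt]; exact hba.2))

lemma exists_large_subfamily_dominatedAbove (hA : ∀ a ∈ A, a.IsRegular) (hbdd : BddAbove A)
    {l : Cardinal.{0}} (hl : l.IsRegular) (hcof : ¬ Cardinal.lift.{1} l ≤ cofJbd A)
    {F : Set (↥A → Ordinal.{0})} (hF : F ⊆ piSet A) (hFl : #F = Cardinal.lift.{1} l) :
    ∃ g ∈ piSet A, ∃ b < sSup A, ∃ F' ⊆ F, #F' = Cardinal.lift.{1} l ∧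
      ∀ f ∈ F', DominatesAbove A b g f := by
  obtain ⟨a₀, ha₀⟩ := nonempty_of_one_lt_mk (hFl ▸ one_lt_aleph0.trans_le hl.lift.aleph0_le)
  have hσ : 0 < sSup A := (hA a₀ ha₀).pos.trans_le (le_csSup hbdd ha₀)
  obtain ⟨S, hS, hSc, hScof⟩ := exists_mk_eq_cofJbd hσ
  have hSl : #S < Cardinal.lift.{1} l := hSc ▸ not_le.1 hcof
  have hσl : Cardinal.lift.{1} (sSup A) < Cardinal.lift.{1} l :=
    (lift_sSup_le_mk_of_cofinal hA hS hScof).trans_lt hSl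
  choose! G hG B hB hGB using fun f (hf : f ∈ F) => hScof f (hF hf)
  -- `b ↦ b.ord` injects the bounds below `sup A` into an ordinal of cardinality `sup A`
  have hI : #(S ×ˢ Iio (sSup A).ord) < Cardinal.lift.{1} l := by
    rw [mk_setProd, mk_Iio_ordinal, card_ord]
    exact mul_lt_of_lt hl.lift.aleph0_le hSl hσl
  obtain ⟨F', hF'F, hF'l, ⟨g, o⟩, hconst⟩ := exists_subset_mk_eq_of_mapsTo hl.lift hFl
    (m := fun f => (G f, (B f).ord)) (fun f hf => mk_mem_prod (hG f hf) (ord_lt_ord.2 (hB f hf))) hI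
  obtain ⟨f₀, hf₀⟩ := nonempty_of_mk_eq hl.lift hF'l
  refine ⟨G f₀, hS (hG f₀ (hF'F hf₀)), B f₀, hB f₀ (hF'F hf₀), F', hF'F, hF'l, fun f hf => ?_⟩
  obtain ⟨hGf, hBf⟩ := Prod.mk.inj ((hconst f hf).trans (hconst f₀ hf₀).symm)
  rw [← hGf, ← ord_injective hBf]
  exact hGB f (hF'F hf)

def restrictLE (b : Cardinal.{0}) (f : ↥A → Ordinal.{0}) : ↥{a ∈ A | a ≤ b} → Ordinal.{0} :=
  f ∘ inclusion (sep_subset A (· ≤ b))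

lemma bddIn_of_bddIn_restrict {b : Cardinal.{0}} {g : ↥A → Ordinal.{0}} (hg : g ∈ piSet A)
    {F : Set (↥A → Ordinal.{0})} (hdom : ∀ f ∈ F, DominatesAbove A b g f)
    (hres : BddIn {a ∈ A | a ≤ b} (restrictLE b '' F)) :
    BddIn A F := by
  classical
  obtain ⟨h, hh, hhF⟩ := hres
  refine ⟨fun a => if ha : (a : Cardinal) ≤ b then h ⟨a, a.2, ha⟩ else g a,
    fun a => ?_, fun f hf a => ?_⟩ <;> dsimp only <;> split_ifs with ha
  · exact hh _
  · exact hg a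
  · exact hhF _ (mem_image_of_mem _ hf) ⟨a, a.2, ha⟩
  · exact hdom f hf a (not_le.1 ha)

lemma mem_spec_sep_le {l : Cardinal.{0}} (hl : l.IsRegular) {F : Set (↥A → Ordinal.{0})}
    (hF : F ⊆ piSet A) (hunb : ∀ F₀ ⊆ F, #F₀ = Cardinal.lift.{1} l → ¬ BddIn A F₀)
    {g : ↥A → Ordinal.{0}} (hg : g ∈ piSet A) {b : Cardinal.{0}} {F' : Set (↥A → Ordinal.{0})}
    (hF'F : F' ⊆ F) (hF'l : #F' = Cardinal.lift.{1} l) (hdom : ∀ f ∈ F', DominatesAbove A b g f) :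
    l ∈ spec {a ∈ A | a ≤ b} := by
  have hsmall (F₀ : Set (↥A → Ordinal.{0})) (hF₀ : F₀ ⊆ F')
      (hbdd : BddIn {a ∈ A | a ≤ b} (restrictLE b '' F₀)) : #F₀ < Cardinal.lift.{1} l :=
    ((mk_le_mk_of_subset hF₀).trans_eq hF'l).lt_of_ne fun h =>
      hunb F₀ (hF₀.trans hF'F) h (bddIn_of_bddIn_restrict hg (fun f hf => hdom f (hF₀ hf)) hbdd)
  refine ⟨hl, restrictLE b '' F', ?_, ?_, fun G₀ hG₀ hG₀l hbddG₀ => ?_⟩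
  · rintro _ ⟨f, hf, rfl⟩ x
    exact hF (hF'F hf) _
  · refine (hF'l ▸ mk_image_le).antisymm (not_lt.1 fun hlt => ?_)
    obtain ⟨t, htF', htl, t₀, ht⟩ :=
      exists_subset_mk_eq_of_mapsTo hl.lift hF'l (mapsTo_image _ F') hlt
    obtain ⟨f₀, hf₀⟩ := nonempty_of_mk_eq hl.lift htl
    refine (hsmall t htF' ⟨restrictLE b f₀, fun x => hF (hF'F (htF' hf₀)) _, ?_⟩).ne htl
    rintro _ ⟨f, hf, rfl⟩ x
    rw [ht f hf, ← ht f₀ hf₀]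
  · have himage : restrictLE b '' (F' ∩ restrictLE b ⁻¹' G₀) = G₀ :=
      (image_inter_preimage _ _ _).trans (inter_eq_right.2 hG₀)
    have hlarge := mk_image_le (f := restrictLE b) (s := F' ∩ restrictLE b ⁻¹' G₀)
    rw [himage, hG₀l] at hlarge
    exact (hsmall _ inter_subset_left (himage.symm ▸ hbddG₀)).not_ge hlarge

end

theorem statement19_general (A : Set Cardinal.{0}) (hA : ∀ a ∈ A, a.IsRegular)
    (hbdd : BddAbove A) (l : Cardinal.{0}) :
    (l ∈ spec A →
      Cardinal.lift.{1} l ≤ cofJbd A ∨ ∃ b < sSup A, l ∈ spec {a ∈ A | a ≤ b}) ∧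
    (specStarMem A l → Cardinal.lift.{1} l ≤ cofJbd A) := by
  constructor
  · rintro ⟨hl, F, hF, hFl, hunb⟩
    by_cases hcof : Cardinal.lift.{1} l ≤ cofJbd A
    · exact Or.inl hcof
    obtain ⟨g, hg, b, hb, F', hF'F, hF'l, hdom⟩ :=
      exists_large_subfamily_dominatedAbove hA hbdd hl hcof hF hFl
    exact Or.inr ⟨b, hb, mem_spec_sep_le hl hF hunb hg hF'F hF'l hdom⟩
  · rintro ⟨hl, F, hF, hFl, hub⟩
    by_contra hcof
    obtain ⟨g, hg, b, hb, F', hF'F, hF'l, hdom⟩ :=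
      exists_large_subfamily_dominatedAbove hA hbdd hl hcof hF hFl
    obtain ⟨a, hunbdd, hba⟩ := hub F' hF'F hF'l b hb
    obtain ⟨f, hf, hgf⟩ := hunbdd (g a) (hg a)
    exact (hdom f hf a hba).not_gt hgf

/-- For a regular cardinal `l`: if `l ∈ spec(A)` then either
`l ≤ cf(∏A/J_bd)` or `l ∈ spec({a ∈ A : a ≤ b})` for some `b < sup A`; and
if `l ∈ spec*(A)` then `l ≤ cf(∏A/J_bd)`. -/
theorem statement19 (A : Set Cardinal.{0}) (hA : ∀ a ∈ A, a.IsRegular)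
    (hbdd : BddAbove A) (l : Cardinal.{0}) (hreg : l.IsRegular) :
    (l ∈ spec A →
      Cardinal.lift.{1} l ≤ cofJbd A ∨ ∃ b < sSup A, l ∈ spec {a ∈ A | a ≤ b}) ∧
    (specStarMem A l → Cardinal.lift.{1} l ≤ cofJbd A) :=
  statement19_general A hA hbdd l

end TukeySpec
end
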